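/- Let 𝒫 be a partial clustering, let (P_1,…,P_k) be an optimal extension of 𝒫 with associated centers (c'_i), and set R_j = P_j ∩ R for every j. Fix i ∈ [k] with |I_i| ≥ Δ + 1 and j ∈ [k]∖{i} with I_j = ∅. Let J'_j ⊆ I_i be obtained from I_i by removing Δ coordinates with the largest values of d^{r}(u_i, c'_j); that is, |I_i − J'_j| = Δ and d^{r}(u_i, c'_j) ≥ d^{s}(u_i, c'_j) for every r ∈ I_i − J'_j and every s ∈ J'_j. Set d^j = d^{J'_j}(u_i, c'_j). If d^j > 0, then every x ∈ R_j with Dom(x) ⊆ I_i satisfies d(x, u_i) > d^j/4. -/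

import Mathlib

/-!
Moving a point `x ∈ R_j` with `Dom x ⊆ I_i` from cluster `j` to cluster `i` gives another
extension. It leaves `c'_i` unchanged (`x` has no coordinate outside `I_i`), adds
`d(x, c'_i)² = d(x, u_i)²` to cluster `i`, and lowers the cost of cluster `j` to at most
`f₂(P_j, c'_j) - d(x, c'_j)²`, because the mean of the shrunken cluster is at least as good a
center for it as `c'_j`. Optimality therefore gives `d(x, c'_j) ≤ d(x, u_i)`.
Since `x` misses at most `Δ` coordinates of `I_i` while `J'` drops the `Δ` largest ones,
`d^j ≤ d^{Dom x}(u_i, c'_j) ≤ d(x, u_i) + d(x, c'_j) ≤ 2 d(x, u_i)`.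
-/

open Finset

namespace KMD

/-- A point in `ℍ^d`: each coordinate is either a real number or missing (`none`). -/
abbrev HPt (d : ℕ) := Fin d → Option ℝ

variable {d : ℕ}

/-- The domain of a point: the set of coordinates where it is specified. -/
noncomputable def Dom (x : HPt d) : Finset (Fin d) := Finset.univ.filter fun i => x i ≠ none

/-- The number of missing coordinates of a point. -/
noncomputable def numMissing (x : HPt d) : ℕ := (Finset.univ.filter fun i => x i = none).card

/-- A `Δ`-point: at most `Δ` coordinates are missing. -/
def IsDeltaPt (Δ : ℕ) (x : HPt d) : Prop := numMissing x ≤ Δ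

/-- `(a - b)^2`, with the convention that it is `0` when either entry is missing. -/
def coordSq : Option ℝ → Option ℝ → ℝ
  | some a, some b => (a - b) ^ 2
  | _, _ => 0

/-- `d^I(x,y)`. -/
noncomputable def dI (I : Finset (Fin d)) (x y : HPt d) : ℝ :=
  Real.sqrt (∑ i ∈ I, coordSq (x i) (y i))

/-- `d(x,y) = d^{[d]}(x,y)`. -/
noncomputable def dH (x y : HPt d) : ℝ := dI Finset.univ x y

/-- `PD(S, I)`: points of `S` partially defined on `I`. -/
noncomputable def PD (S : Finset (HPt d)) (I : Finset (Fin d)) : Finset (HPt d) :=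
  S.filter fun x => (Dom x ∩ I).Nonempty

/-- `FD(S, I)`: points of `S` fully defined on `I`. -/
noncomputable def FD (S : Finset (HPt d)) (I : Finset (Fin d)) : Finset (HPt d) :=
  S.filter fun x => Dom x ⊆ I

/-- The mean `c^I(P)` of `P` on the coordinates of `I` (unspecified outside `I`). -/
noncomputable def cI (I : Finset (Fin d)) (P : Finset (HPt d)) : HPt d := fun i =>
  if i ∈ I ∧ (PD P {i}).Nonempty then
    some ((∑ x ∈ PD P {i}, (x i).getD 0) / (PD P {i}).card)
  else none

/-- `c(P) = c^{[d]}(P)`. -/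
noncomputable def cP (P : Finset (HPt d)) : HPt d := cI Finset.univ P

/-- `f^I_2(X, y) = Σ_{x ∈ X} d^I(x,y)^2`. -/
noncomputable def f2I (I : Finset (Fin d)) (X : Finset (HPt d)) (y : HPt d) : ℝ :=
  ∑ x ∈ X, dI I x y ^ 2

/-- `f_2 = f^{[d]}_2`. -/
noncomputable def f2 (X : Finset (HPt d)) (y : HPt d) : ℝ := f2I Finset.univ X y

/-- A partial clustering of the instance `P` of `Δ`-points, with `k` clusters. -/
structure PartialClustering (d Δ k : ℕ) (P : Finset (HPt d)) where
  n : Fin k → ℕ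
  H : Fin k → Finset (HPt d)
  I : Fin k → Finset (Fin d)
  u : Fin k → HPt d
  H_sub : ∀ i, H i ⊆ P
  n_le : ∀ i, n i ≤ Δ + 1
  dom_u : ∀ i, Dom (u i) = I i
  I_card : ∀ i, 0 < n i → d - Δ + (n i - 1) ≤ (I i).card
  I_empty : ∀ i, n i = 0 → I i = ∅
  H_empty : ∀ i, n i = 0 → H i = ∅

variable {Δ k : ℕ} {P : Finset (HPt d)}

/-- `R = P − ∪_i H_i`: the points not yet assigned to a cluster. -/
noncomputable def Rset (pc : PartialClustering d Δ k P) : Finset (HPt d) :=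
  P \ Finset.univ.biUnion pc.H

/-- An extension of a partial clustering: a partition `(Q i)` of `P` with `H i ⊆ Q i`. -/
def IsExtension (pc : PartialClustering d Δ k P) (Q : Fin k → Finset (HPt d)) : Prop :=
  (∀ i, pc.H i ⊆ Q i) ∧ (∀ i, Q i ⊆ P) ∧
    (∀ i j, i ≠ j → Disjoint (Q i) (Q j)) ∧ ∀ x ∈ P, ∃ i, x ∈ Q i

/-- The centers associated with an extension: `c'_i` agrees with `u i` on `I i`
and with the mean of `Q i` outside `I i`. -/
noncomputable def centers (pc : PartialClustering d Δ k P)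
    (Q : Fin k → Finset (HPt d)) (i : Fin k) : HPt d :=
  fun r => if r ∈ pc.I i then pc.u i r else cP (Q i) r

/-- The value of an extension. -/
noncomputable def extVal (pc : PartialClustering d Δ k P)
    (Q : Fin k → Finset (HPt d)) : ℝ :=
  ∑ i, f2 (Q i) (centers pc Q i)

/-- `OPT(pc)`: the minimum value over all extensions of `pc`. -/
noncomputable def OPT (pc : PartialClustering d Δ k P) : ℝ :=
  sInf (extVal pc '' {Q | IsExtension pc Q})

/-- An optimal extension. -/
def IsOptimalExtension (pc : PartialClustering d Δ k P)
    (Q : Fin k → Finset (HPt d)) : Prop :=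
  IsExtension pc Q ∧ ∀ Q', IsExtension pc Q' → extVal pc Q ≤ extVal pc Q'

/-- A safe extension. -/
def IsSafe (pc : PartialClustering d Δ k P) (Q : Fin k → Finset (HPt d)) : Prop :=
  ∀ x ∈ Rset pc, ∀ i j : Fin k, Dom x ⊆ pc.I i → Dom x ⊆ pc.I j → x ∈ Q i →
    dH x (centers pc Q i) ≤ dH x (centers pc Q j)

/-- `Z` is a `t`-useless set of coordinates for the pair `(i,j)` and extension `Q`.
For pairs with `I i = ∅` or `I j ≠ ∅` it is by definition the empty set. -/
def IsUseless (pc : PartialClustering d Δ k P) (Q : Fin k → Finset (HPt d))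
    (t : ℝ) (i j : Fin k) (Z : Finset (Fin d)) : Prop :=
  Z ⊆ pc.I i ∧
  (((pc.I i).Nonempty ∧ pc.I j = ∅) →
    (Z = ∅ ∨ d - Δ ≤ Z.card) ∧
    f2I Z (Q j ∩ Rset pc) (pc.u i) - f2I Z (Q j ∩ Rset pc) (centers pc Q j)
      ≤ t * OPT pc) ∧
  (¬ ((pc.I i).Nonempty ∧ pc.I j = ∅) → Z = ∅)

/-- `Z` is compatible with the extension `Q` (for the pair `(i,j)`). -/
def Compatible (pc : PartialClustering d Δ k P) (Q : Fin k → Finset (HPt d))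
    (i j : Fin k) (Z : Finset (Fin d)) : Prop :=
  (∀ x ∈ Q j, ¬ Dom x ⊆ pc.I j → ¬ Dom x ⊆ Z) ∧
  (∀ x ∈ Q j, Dom x ⊆ pc.I i → ¬ dH x (pc.u i) < dH x (centers pc Q j) / 2)

open scoped Classical in
/-- The elements of `FD(S, I)` at distance at most `ρ` from `u`. -/
noncomputable def ballFD (S : Finset (HPt d)) (I : Finset (Fin d))
    (u : HPt d) (ρ : ℝ) : Finset (HPt d) :=
  (FD S I).filter fun x => dH x u ≤ ρ

@[simp]
lemma coordSq_none_left (b : Option ℝ) : coordSq none b = 0 := by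
  cases b <;> rfl

@[simp]
lemma coordSq_none_right (a : Option ℝ) : coordSq a none = 0 := by
  cases a <;> rfl

lemma coordSq_nonneg (a b : Option ℝ) : 0 ≤ coordSq a b := by
  cases a <;> cases b <;> simp only [coordSq, le_refl]
  positivity

lemma coordSq_comm (a b : Option ℝ) : coordSq a b = coordSq b a := by
  cases a <;> cases b <;> simp only [coordSq]
  ring

lemma coordSq_le_sq_add (a c : Option ℝ) (b : ℝ) :
    coordSq a c ≤ (√(coordSq a (some b)) + √(coordSq (some b) c)) ^ 2 := by
  cases a with
  | none => simp
  | some a =>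
    cases c with
    | none => simp
    | some c =>
      simp only [coordSq, Real.sqrt_sq_eq_abs]
      rw [← sq_abs (a - c)]
      gcongr
      exact abs_sub_le a b c

lemma sqrt_sum_add_sq_le {ι : Type*} (s : Finset ι) (f g : ι → ℝ) :
    √(∑ r ∈ s, (f r + g r) ^ 2) ≤ √(∑ r ∈ s, f r ^ 2) + √(∑ r ∈ s, g r ^ 2) := by
  have h := norm_add_le (WithLp.toLp 2 (fun r : s => f r) : EuclideanSpace ℝ s)
    (WithLp.toLp 2 fun r : s => g r)
  simpa [EuclideanSpace.norm_eq, ← Finset.sum_coe_sort s] using h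

lemma dI_nonneg (I : Finset (Fin d)) (x y : HPt d) : 0 ≤ dI I x y := Real.sqrt_nonneg _

lemma dI_sq (I : Finset (Fin d)) (x y : HPt d) :
    dI I x y ^ 2 = ∑ r ∈ I, coordSq (x r) (y r) :=
  Real.sq_sqrt (Finset.sum_nonneg fun _ _ => coordSq_nonneg _ _)

lemma dI_singleton_sq (r : Fin d) (x y : HPt d) : dI {r} x y ^ 2 = coordSq (x r) (y r) := by
  rw [dI_sq, Finset.sum_singleton]

lemma dI_comm (I : Finset (Fin d)) (x y : HPt d) : dI I x y = dI I y x := by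
  simp only [dI, coordSq_comm (x _)]

lemma dI_mono {I I' : Finset (Fin d)} (h : I ⊆ I') (x y : HPt d) : dI I x y ≤ dI I' x y :=
  Real.sqrt_le_sqrt (Finset.sum_le_sum_of_subset_of_nonneg h fun _ _ _ => coordSq_nonneg _ _)

lemma mem_Dom {x : HPt d} {r : Fin d} : r ∈ Dom x ↔ x r ≠ none := by
  simp [Dom]

/-- Missing coordinates contribute `0`, so the middle point must be defined on all of `I`. -/
lemma dI_triangle {I : Finset (Fin d)} {y : HPt d} (hI : I ⊆ Dom y) (x z : HPt d) :
    dI I x z ≤ dI I x y + dI I y z := by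
  have hpt : ∀ r ∈ I, coordSq (x r) (z r) ≤ (dI {r} x y + dI {r} y z) ^ 2 := by
    intro r hr
    obtain ⟨b, hb⟩ := Option.ne_none_iff_exists'.mp (mem_Dom.mp (hI hr))
    simpa only [dI, Finset.sum_singleton, hb] using coordSq_le_sq_add (x r) (z r) b
  calc dI I x z ≤ √(∑ r ∈ I, (dI {r} x y + dI {r} y z) ^ 2) :=
        Real.sqrt_le_sqrt (Finset.sum_le_sum hpt)
    _ ≤ √(∑ r ∈ I, dI {r} x y ^ 2) + √(∑ r ∈ I, dI {r} y z ^ 2) := sqrt_sum_add_sq_le _ _ _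
    _ = dI I x y + dI I y z := by simp only [dI_singleton_sq]; rfl

lemma sum_sq_sub_mean_le {ι : Type*} (T : Finset ι) (g : ι → ℝ) (b : ℝ) :
    ∑ y ∈ T, (g y - (∑ z ∈ T, g z) / T.card) ^ 2 ≤ ∑ y ∈ T, (g y - b) ^ 2 := by
  rcases T.eq_empty_or_nonempty with rfl | hT
  · simp
  set m := (∑ z ∈ T, g z) / T.card with hm
  have hdev : ∑ y ∈ T, (g y - m) = 0 := by
    rw [Finset.sum_sub_distrib, Finset.sum_const, nsmul_eq_mul, hm,
      mul_div_cancel₀ _ (Nat.cast_ne_zero.mpr hT.card_pos.ne'), sub_self]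
  have hsplit : ∀ y, (g y - b) ^ 2 = (g y - m) ^ 2 + 2 * (m - b) * (g y - m) + (m - b) ^ 2 :=
    fun y => by ring
  simp_rw [hsplit, Finset.sum_add_distrib, ← Finset.mul_sum, hdev, mul_zero, add_zero]
  linarith [Finset.sum_nonneg fun y (_ : y ∈ T) => sq_nonneg (m - b)]

lemma PD_singleton (S : Finset (HPt d)) (r : Fin d) :
    PD S {r} = S.filter fun y => y r ≠ none := by
  simp [PD, Dom, Finset.Nonempty, Finset.mem_inter]

lemma cP_apply_of_nonempty {S : Finset (HPt d)} {r : Fin d} (h : (PD S {r}).Nonempty) :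
    cP S r = some ((∑ y ∈ PD S {r}, (y r).getD 0) / (PD S {r}).card) := by
  simp [cP, cI, h]

lemma Dom_subset_Dom_cP {S : Finset (HPt d)} {y : HPt d} (hy : y ∈ S) : Dom y ⊆ Dom (cP S) := by
  intro r hr
  have h : (PD S {r}).Nonempty := ⟨y, by simpa [PD_singleton, hy] using mem_Dom.mp hr⟩
  simp [mem_Dom, cP_apply_of_nonempty h]

lemma cP_insert_apply {S : Finset (HPt d)} {x : HPt d} {r : Fin d} (hr : r ∉ Dom x) :
    cP (insert x S) r = cP S r := by
  have h : PD (insert x S) {r} = PD S {r} := by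
    rw [PD_singleton, PD_singleton, Finset.filter_insert, if_neg (by simpa [mem_Dom] using hr)]
  simp only [cP, cI, h]

lemma sum_coordSq_some (S : Finset (HPt d)) (r : Fin d) (a : ℝ) :
    ∑ y ∈ S, coordSq (y r) (some a) = ∑ y ∈ PD S {r}, ((y r).getD 0 - a) ^ 2 := by
  rw [PD_singleton, Finset.sum_filter]
  refine Finset.sum_congr rfl fun y _ => ?_
  cases y r <;> simp [coordSq]

lemma sum_coordSq_cP_le (S : Finset (HPt d)) (r : Fin d) {a : Option ℝ}
    (ha : a = none → ∀ y ∈ S, y r = none) :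
    ∑ y ∈ S, coordSq (y r) (cP S r) ≤ ∑ y ∈ S, coordSq (y r) a := by
  by_cases hPD : (PD S {r}).Nonempty
  · obtain ⟨y, hy⟩ := hPD
    obtain ⟨b, rfl⟩ : ∃ b, a = some b := Option.ne_none_iff_exists'.mp fun ha' => by
      simp only [PD_singleton, Finset.mem_filter] at hy
      exact hy.2 (ha ha' y hy.1)
    rw [cP_apply_of_nonempty ⟨y, hy⟩, sum_coordSq_some, sum_coordSq_some]
    exact sum_sq_sub_mean_le _ _ _
  · have hnone : ∀ y ∈ S, y r = none := fun y hy => by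
      by_contra h
      exact hPD ⟨y, by simpa [PD_singleton, hy] using h⟩
    rw [Finset.sum_eq_zero fun y hy => by rw [hnone y hy, coordSq_none_left]]
    exact Finset.sum_nonneg fun _ _ => coordSq_nonneg _ _

lemma f2_eq_sum_coordSq (S : Finset (HPt d)) (c : HPt d) :
    f2 S c = ∑ r, ∑ y ∈ S, coordSq (y r) (c r) := by
  simp only [f2, f2I, dI_sq]
  exact Finset.sum_comm

lemma f2_cP_le {S : Finset (HPt d)} {c : HPt d} (hc : ∀ y ∈ S, Dom y ⊆ Dom c) :
    f2 S (cP S) ≤ f2 S c := by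
  rw [f2_eq_sum_coordSq, f2_eq_sum_coordSq]
  refine Finset.sum_le_sum fun r _ => sum_coordSq_cP_le S r fun hcr y hy => ?_
  by_contra h
  exact mem_Dom.mp (hc y hy (mem_Dom.mpr h)) hcr

lemma sum_le_sum_of_card_le_of_forall_le {ι : Type*} {A B : Finset ι} {w : ι → ℝ}
    (hw : ∀ b ∈ B, 0 ≤ w b) (hcard : A.card ≤ B.card) (hle : ∀ a ∈ A, ∀ b ∈ B, w a ≤ w b) :
    ∑ r ∈ A, w r ≤ ∑ r ∈ B, w r := by
  rcases B.eq_empty_or_nonempty with rfl | hB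
  · rw [Finset.card_eq_zero.mp (Nat.le_zero.mp hcard)]
  obtain ⟨m, hm, hmin⟩ := B.exists_min_image w hB
  calc ∑ r ∈ A, w r ≤ A.card • w m := Finset.sum_le_card_nsmul A w (w m) fun a ha => hle a ha m hm
    _ ≤ B.card • w m := nsmul_le_nsmul_left (hw m hm) hcard
    _ ≤ ∑ r ∈ B, w r := Finset.card_nsmul_le_sum B w (w m) hmin

lemma sum_le_sum_of_card_sdiff_le {ι : Type*} [DecidableEq ι] {I J D : Finset ι} {w : ι → ℝ}
    (hw : ∀ r ∈ I, 0 ≤ w r) (hJ : J ⊆ I) (hD : D ⊆ I) (hcard : (I \ D).card ≤ (I \ J).card)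
    (hmax : ∀ r ∈ I \ J, ∀ s ∈ J, w s ≤ w r) :
    ∑ r ∈ J, w r ≤ ∑ r ∈ D, w r := by
  have hJD : (J \ D).card ≤ (D \ J).card := by
    rw [Finset.card_sdiff_le_card_sdiff_iff]
    have := Finset.card_le_card hJ
    have := Finset.card_le_card hD
    rw [Finset.card_sdiff_of_subset hJ, Finset.card_sdiff_of_subset hD] at hcard
    omega
  have hdiff : ∑ r ∈ J \ D, w r ≤ ∑ r ∈ D \ J, w r :=
    sum_le_sum_of_card_le_of_forall_le (fun r hr => hw r (hD (Finset.sdiff_subset hr))) hJD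
      fun s hs r hr => hmax r (Finset.sdiff_subset_sdiff hD le_rfl hr) s (Finset.sdiff_subset hs)
  rw [← Finset.sum_inter_add_sum_sdiff J D, ← Finset.sum_inter_add_sum_sdiff D J,
    Finset.inter_comm]
  linarith

lemma dI_le_dI_of_card_sdiff_le {I J D : Finset (Fin d)} {x y : HPt d} (hJ : J ⊆ I) (hD : D ⊆ I)
    (hcard : (I \ D).card ≤ (I \ J).card)
    (hmax : ∀ r ∈ I \ J, ∀ s ∈ J, dI {s} x y ≤ dI {r} x y) :
    dI J x y ≤ dI D x y := by
  refine Real.sqrt_le_sqrt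
    (sum_le_sum_of_card_sdiff_le (fun _ _ => coordSq_nonneg _ _) hJ hD hcard fun r hr s hs => ?_)
  rw [← dI_singleton_sq, ← dI_singleton_sq]
  exact pow_le_pow_left₀ (dI_nonneg _ _ _) (hmax r hr s hs) 2

lemma card_sdiff_Dom_le_numMissing (I : Finset (Fin d)) (x : HPt d) :
    (I \ Dom x).card ≤ numMissing x := by
  refine Finset.card_le_card fun r hr => ?_
  simpa [mem_Dom] using (Finset.mem_sdiff.mp hr).2

lemma mem_Rset {pc : PartialClustering d Δ k P} {x : HPt d} :
    x ∈ Rset pc ↔ x ∈ P ∧ ∀ l, x ∉ pc.H l := by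
  simp [Rset]

lemma centers_eq_cP {pc : PartialClustering d Δ k P} {Q : Fin k → Finset (HPt d)} {j : Fin k}
    (hIj : pc.I j = ∅) : centers pc Q j = cP (Q j) := by
  funext r
  simp [centers, hIj]

lemma dH_centers_eq {pc : PartialClustering d Δ k P} {Q : Fin k → Finset (HPt d)} {i : Fin k}
    {x : HPt d} (hxi : Dom x ⊆ pc.I i) : dH x (centers pc Q i) = dH x (pc.u i) := by
  refine congrArg Real.sqrt (Finset.sum_congr rfl fun r _ => ?_)
  by_cases hr : r ∈ pc.I i
  · simp [centers, hr]
  · have hxr : x r = none := by simpa [mem_Dom] using fun h => hr (hxi h)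
    rw [hxr, coordSq_none_left, coordSq_none_left]

lemma f2_insert {S : Finset (HPt d)} {x : HPt d} (hx : x ∉ S) (c : HPt d) :
    f2 (insert x S) c = f2 S c + dH x c ^ 2 := by
  rw [f2, f2I, Finset.sum_insert hx, add_comm]
  rfl

lemma f2_erase_add {S : Finset (HPt d)} {x : HPt d} (hx : x ∈ S) (c : HPt d) :
    f2 (S.erase x) c + dH x c ^ 2 = f2 S c := by
  rw [← f2_insert (Finset.notMem_erase x S), Finset.insert_erase hx]

noncomputable def moveTo (Q : Fin k → Finset (HPt d)) (x : HPt d) (i : Fin k) :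
    Fin k → Finset (HPt d) :=
  fun l => if l = i then insert x (Q l) else (Q l).erase x

lemma moveTo_self (Q : Fin k → Finset (HPt d)) (x : HPt d) (i : Fin k) :
    moveTo Q x i i = insert x (Q i) :=
  if_pos rfl

lemma moveTo_of_ne (Q : Fin k → Finset (HPt d)) (x : HPt d) {i l : Fin k} (h : l ≠ i) :
    moveTo Q x i l = (Q l).erase x :=
  if_neg h

lemma IsExtension.moveTo_of_mem_Rset {pc : PartialClustering d Δ k P} {Q : Fin k → Finset (HPt d)}
    (hQ : IsExtension pc Q) {x : HPt d} (hx : x ∈ Rset pc) (i : Fin k) :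
    IsExtension pc (moveTo Q x i) := by
  obtain ⟨hH, hQP, hdisj, hcover⟩ := hQ
  obtain ⟨hxP, hxH⟩ := mem_Rset.mp hx
  have hdisj' : ∀ a b, a ≠ b → b ≠ i → Disjoint (moveTo Q x i a) (moveTo Q x i b) := by
    intro a b hab hb
    rw [moveTo_of_ne Q x hb]
    by_cases ha : a = i
    · rw [ha, moveTo_self, Finset.disjoint_insert_left]
      exact ⟨Finset.notMem_erase x _, (hdisj i b (ha ▸ hab)).mono_right (Finset.erase_subset _ _)⟩
    · rw [moveTo_of_ne Q x ha]
      exact (hdisj a b hab).mono (Finset.erase_subset _ _) (Finset.erase_subset _ _)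
  refine ⟨fun l => ?_, fun l => ?_, fun a b hab => ?_, fun y hy => ?_⟩
  · by_cases hl : l = i
    · rw [hl, moveTo_self]
      exact (hH i).trans (Finset.subset_insert _ _)
    · rw [moveTo_of_ne Q x hl]
      exact Finset.subset_erase.mpr ⟨hH l, hxH l⟩
  · by_cases hl : l = i
    · rw [hl, moveTo_self]
      exact Finset.insert_subset hxP (hQP i)
    · rw [moveTo_of_ne Q x hl]
      exact (Finset.erase_subset _ _).trans (hQP l)
  · by_cases hb : b = i
    · exact (hdisj' b a hab.symm (hb ▸ hab)).symm
    · exact hdisj' a b hab hb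
  · by_cases hyx : y = x
    · exact ⟨i, by simp [moveTo_self, hyx]⟩
    · obtain ⟨l, hl⟩ := hcover y hy
      refine ⟨l, ?_⟩
      by_cases hli : l = i
      · subst hli
        simp [moveTo_self, hl]
      · simp [moveTo_of_ne Q x hli, hl, hyx]

lemma centers_moveTo_self {pc : PartialClustering d Δ k P} {Q : Fin k → Finset (HPt d)}
    {x : HPt d} {i : Fin k} (hxi : Dom x ⊆ pc.I i) :
    centers pc (moveTo Q x i) i = centers pc Q i := by
  funext r
  simp only [centers, moveTo_self]
  split_ifs with hr
  · rfl
  · exact cP_insert_apply fun h => hr (hxi h)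

lemma extVal_moveTo_add_le {pc : PartialClustering d Δ k P} {Q : Fin k → Finset (HPt d)}
    (hQ : IsExtension pc Q) {x : HPt d} {i j : Fin k} (hij : j ≠ i) (hIj : pc.I j = ∅)
    (hxj : x ∈ Q j) (hxi : Dom x ⊆ pc.I i) :
    extVal pc (moveTo Q x i) + dH x (centers pc Q j) ^ 2 ≤
      extVal pc Q + dH x (centers pc Q i) ^ 2 := by
  have hxQ : ∀ l, l ≠ j → x ∉ Q l := fun l hl hxl =>
    Finset.disjoint_left.mp (hQ.2.2.1 l j hl) hxl hxj
  have hgain : f2 (moveTo Q x i i) (centers pc (moveTo Q x i) i) =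
      f2 (Q i) (centers pc Q i) + dH x (centers pc Q i) ^ 2 := by
    rw [centers_moveTo_self hxi, moveTo_self, f2_insert (hxQ i hij.symm)]
  have hloss : f2 (moveTo Q x i j) (centers pc (moveTo Q x i) j) + dH x (centers pc Q j) ^ 2 ≤
      f2 (Q j) (centers pc Q j) := by
    rw [centers_eq_cP hIj, centers_eq_cP hIj, moveTo_of_ne Q x hij, ← f2_erase_add hxj]
    gcongr ?_ + _
    exact f2_cP_le fun y hy => Dom_subset_Dom_cP (Finset.mem_of_mem_erase hy)
  have hrest : ∀ l, l ≠ i ∧ l ≠ j →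
      f2 (moveTo Q x i l) (centers pc (moveTo Q x i) l) - f2 (Q l) (centers pc Q l) = 0 := by
    rintro l ⟨hli, hlj⟩
    have hQl : moveTo Q x i l = Q l := by
      rw [moveTo_of_ne Q x hli, Finset.erase_eq_of_notMem (hxQ l hlj)]
    have hcl : centers pc (moveTo Q x i) l = centers pc Q l := by
      unfold centers
      rw [hQl]
    rw [hQl, hcl, sub_self]
  have hsum := Fintype.sum_eq_add i j hij.symm hrest
  rw [Finset.sum_sub_distrib] at hsum
  unfold extVal
  linarith

lemma dH_centers_le_of_isOptimalExtension {pc : PartialClustering d Δ k P}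
    {Q : Fin k → Finset (HPt d)} (hQ : IsOptimalExtension pc Q) {x : HPt d} {i j : Fin k}
    (hij : j ≠ i) (hIj : pc.I j = ∅) (hxj : x ∈ Q j) (hxR : x ∈ Rset pc)
    (hxi : Dom x ⊆ pc.I i) :
    dH x (centers pc Q j) ≤ dH x (pc.u i) := by
  have hopt := hQ.2 _ (hQ.1.moveTo_of_mem_Rset hxR i)
  have hmove := extVal_moveTo_add_le hQ.1 hij hIj hxj hxi
  rw [dH_centers_eq hxi] at hmove
  have hsq : dH x (centers pc Q j) ^ 2 ≤ dH x (pc.u i) ^ 2 := by linarith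
  exact (pow_le_pow_iff_left₀ (dI_nonneg _ _ _) (dI_nonneg _ _ _) two_ne_zero).mp hsq

theorem stmt_5_general {d Δ k : ℕ}
    {P : Finset (HPt d)} (hP : ∀ y ∈ P, IsDeltaPt Δ y ∧ (Dom y).Nonempty)
    (pc : PartialClustering d Δ k P)
    (Q : Fin k → Finset (HPt d)) (hQ : IsOptimalExtension pc Q)
    (i j : Fin k) (hij : j ≠ i) (hIj : pc.I j = ∅)
    (J' : Finset (Fin d)) (hJ'sub : J' ⊆ pc.I i) (hJ'card : (pc.I i \ J').card = Δ)
    (hJ'max : ∀ r ∈ pc.I i \ J', ∀ s ∈ J',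
      dI {s} (pc.u i) (centers pc Q j) ≤ dI {r} (pc.u i) (centers pc Q j))
    (dj : ℝ) (hdj : dj = dI J' (pc.u i) (centers pc Q j)) (hpos : 0 < dj) :
    ∀ x ∈ Q j ∩ Rset pc, Dom x ⊆ pc.I i → dj / 4 < dH x (pc.u i) := by
  intro x hx hxi
  obtain ⟨hxj, hxR⟩ := Finset.mem_inter.mp hx
  have hmissing : (pc.I i \ Dom x).card ≤ (pc.I i \ J').card := by
    rw [hJ'card]
    exact (card_sdiff_Dom_le_numMissing _ x).trans (hP x (mem_Rset.mp hxR).1).1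
  have hdom : dj ≤ dI (Dom x) (pc.u i) (centers pc Q j) :=
    hdj ▸ dI_le_dI_of_card_sdiff_le hJ'sub hxi hmissing hJ'max
  have htri : dI (Dom x) (pc.u i) (centers pc Q j) ≤ dH x (pc.u i) + dH x (centers pc Q j) :=
    calc dI (Dom x) (pc.u i) (centers pc Q j)
        ≤ dI (Dom x) (pc.u i) x + dI (Dom x) x (centers pc Q j) := dI_triangle subset_rfl _ _
      _ ≤ dH x (pc.u i) + dH x (centers pc Q j) := by
        rw [dI_comm _ (pc.u i)]
        exact add_le_add (dI_mono (Finset.subset_univ _) _ _) (dI_mono (Finset.subset_univ _) _ _)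
  have hclose := dH_centers_le_of_isOptimalExtension hQ hij hIj hxj hxR hxi
  linarith

/-- Lemma 4: points of `R_j` fully defined on `I_i` are far from `u_i`. -/
theorem stmt_5 {d Δ k : ℕ} (hd : 1 ≤ d) (hΔ : Δ < d) (hk : 1 ≤ k)
    {P : Finset (HPt d)} (hP : ∀ y ∈ P, IsDeltaPt Δ y ∧ (Dom y).Nonempty)
    (pc : PartialClustering d Δ k P)
    (Q : Fin k → Finset (HPt d)) (hQ : IsOptimalExtension pc Q)
    (i j : Fin k) (hij : j ≠ i) (hIi : Δ + 1 ≤ (pc.I i).card) (hIj : pc.I j = ∅)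
    (J' : Finset (Fin d)) (hJ'sub : J' ⊆ pc.I i) (hJ'card : (pc.I i \ J').card = Δ)
    (hJ'max : ∀ r ∈ pc.I i \ J', ∀ s ∈ J',
      dI {s} (pc.u i) (centers pc Q j) ≤ dI {r} (pc.u i) (centers pc Q j))
    (dj : ℝ) (hdj : dj = dI J' (pc.u i) (centers pc Q j)) (hpos : 0 < dj) :
    ∀ x ∈ Q j ∩ Rset pc, Dom x ⊆ pc.I i → dj / 4 < dH x (pc.u i) :=
  stmt_5_general hP pc Q hQ i j hij hIj J' hJ'sub hJ'card hJ'max dj hdj hpos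

end KMD
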